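/- Suppose a probability measure F on ℝ satisfies F = (1 − θ)·H + θ·(K_a ∗ δ_u) for some a > 0, u ∈ ℝ, θ ∈ (0,1] and some probability measure H on ℝ. Then for all p, q with 0 < q ≤ p ≤ 1, there exists a probability measure H′ on ℝ such that F = (1 − qθ)·H′ + qθ·(K_{pa} ∗ δ_u). -/

import Mathlib

open MeasureTheory

/-- The triangular density with parameter `a`. -/
noncomputable def triDensity (a : ℝ) (x : ℝ) : ℝ :=
  if |x| ≤ a then (1 / a) * (1 - |x| / a) else 0

/-- `K_a`, the probability measure on `ℝ` with the triangular density `κ_a`. -/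
noncomputable def triMeasure (a : ℝ) : Measure ℝ :=
  volume.withDensity fun x => ENNReal.ofReal (triDensity a x)

/-!
The point is the pointwise bound `q κ_{pa} ≤ κ_a` for `0 < q ≤ p ≤ 1`: the narrower triangle,
scaled down by `q`, fits under the wider one. Hence `qθ (K_{pa} ∗ δ_u) ≤ θ (K_a ∗ δ_u) ≤ F`,
and whatever is left of `F` is a measure of mass `1 - qθ`, i.e. `(1 - qθ) H'` for a
probability measure `H'`.
-/

namespace MeasureTheory.Measure

variable {α : Type*} [MeasurableSpace α]

theorem exists_isProbabilityMeasure_eq_smul [Nonempty α] (ρ : Measure α) [IsFiniteMeasure ρ] :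
    ∃ H : Measure α, IsProbabilityMeasure H ∧ ρ = ρ Set.univ • H := by
  by_cases h0 : ρ = 0
  · exact ⟨dirac (Classical.arbitrary α), inferInstance, by simp [h0]⟩
  have hc : ρ Set.univ ≠ 0 := by simpa using h0
  refine ⟨(ρ Set.univ)⁻¹ • ρ, ⟨?_⟩, ?_⟩
  · rw [smul_apply, smul_eq_mul, ENNReal.inv_mul_cancel hc (measure_ne_top _ _)]
  · rw [smul_smul, ENNReal.mul_inv_cancel hc (measure_ne_top _ _), one_smul]

theorem exists_eq_smul_add_smul_of_smul_le {F μ : Measure α} [IsProbabilityMeasure F]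
    [IsProbabilityMeasure μ] {s : ℝ} (hs : 0 ≤ s) (hle : ENNReal.ofReal s • μ ≤ F) :
    ∃ H : Measure α, IsProbabilityMeasure H ∧
      F = ENNReal.ofReal (1 - s) • H + ENNReal.ofReal s • μ := by
  have := nonempty_of_isProbabilityMeasure F
  have : IsFiniteMeasure (ENNReal.ofReal s • μ) := ⟨by simp⟩
  set ρ := F - ENNReal.ofReal s • μ
  have hF : ρ + ENNReal.ofReal s • μ = F := sub_add_cancel_of_le hle
  have hmass : ρ Set.univ = ENNReal.ofReal (1 - s) := by
    have h := congrArg (fun ν : Measure α => ν Set.univ) hF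
    simp only [add_apply, smul_apply, measure_univ, smul_eq_mul, mul_one] at h
    rw [ENNReal.ofReal_sub 1 hs, ENNReal.ofReal_one]
    exact ENNReal.eq_sub_of_add_eq ENNReal.ofReal_ne_top h
  obtain ⟨H, hH, hρ⟩ := exists_isProbabilityMeasure_eq_smul ρ
  exact ⟨H, hH, by rw [← hF, hρ, hmass]⟩

end MeasureTheory.Measure

theorem triDensity_nonneg (a x : ℝ) : 0 ≤ triDensity a x := by
  unfold triDensity
  split_ifs with h
  · have ha : 0 ≤ a := (abs_nonneg x).trans h
    exact mul_nonneg (by positivity) (sub_nonneg.2 (div_le_one_of_le₀ h ha))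
  · exact le_rfl

theorem measurable_triDensity (a : ℝ) : Measurable (triDensity a) :=
  Measurable.ite (measurableSet_le (by fun_prop) measurable_const) (by fun_prop) measurable_const

theorem integral_triDensity {a : ℝ} (ha : 0 < a) : ∫ x, triDensity a x = 1 := by
  have hhalf : ∫ t in Set.Ioi 0, (Set.Iic a).indicator (fun t => 1 / a * (1 - t / a)) t
      = 1 / 2 := by
    rw [setIntegral_indicator measurableSet_Iic, Set.Ioi_inter_Iic,
      ← intervalIntegral.integral_of_le ha.le, intervalIntegral.integral_const_mul,
      intervalIntegral.integral_sub intervalIntegrable_const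
        (intervalIntegral.intervalIntegrable_id.div_const a),
      intervalIntegral.integral_div, integral_id, intervalIntegral.integral_const]
    field_simp
    ring
  have h := integral_comp_abs (f := (Set.Iic a).indicator fun t => 1 / a * (1 - t / a))
  simp only [Set.indicator_apply, Set.mem_Iic] at h hhalf
  unfold triDensity
  rw [h, hhalf]
  norm_num

theorem isProbabilityMeasure_triMeasure {a : ℝ} (ha : 0 < a) :
    IsProbabilityMeasure (triMeasure a) := by
  have hint : Integrable (triDensity a) :=
    Integrable.of_integral_ne_zero (by rw [integral_triDensity ha]; exact one_ne_zero)
  constructor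
  rw [triMeasure, withDensity_apply _ MeasurableSet.univ, setLIntegral_univ,
    ← ofReal_integral_eq_lintegral_ofReal hint (Filter.Eventually.of_forall (triDensity_nonneg a)),
    integral_triDensity ha, ENNReal.ofReal_one]

theorem mul_triDensity_le {a p q : ℝ} (ha : 0 < a) (hp : 0 < p) (hqp : q ≤ p) (hp1 : p ≤ 1)
    (x : ℝ) : q * triDensity (p * a) x ≤ triDensity a x := by
  by_cases hx : |x| ≤ p * a
  · have hpa : 0 < p * a := mul_pos hp ha
    have hpa_le : p * a ≤ a := mul_le_of_le_one_left ha.le hp1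
    calc q * triDensity (p * a) x ≤ p * triDensity (p * a) x :=
          mul_le_mul_of_nonneg_right hqp (triDensity_nonneg _ x)
      _ = 1 / a * (1 - |x| / (p * a)) := by
          rw [triDensity, if_pos hx]
          field_simp
      _ ≤ 1 / a * (1 - |x| / a) := by gcongr
      _ = triDensity a x := by rw [triDensity, if_pos (hx.trans hpa_le)]
  · rw [triDensity, if_neg hx, mul_zero]
    exact triDensity_nonneg a x

theorem smul_triMeasure_le {a p q : ℝ} (ha : 0 < a) (hp : 0 < p) (hqp : q ≤ p) (hp1 : p ≤ 1) :
    ENNReal.ofReal q • triMeasure (p * a) ≤ triMeasure a := by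
  rw [triMeasure, triMeasure, ← withDensity_smul _ (measurable_triDensity _).ennreal_ofReal]
  refine withDensity_mono (Filter.Eventually.of_forall fun x => ?_)
  rw [Pi.smul_apply, smul_eq_mul, ← ENNReal.ofReal_mul' (triDensity_nonneg _ x)]
  exact ENNReal.ofReal_le_ofReal (mul_triDensity_le ha hp hqp hp1 x)

theorem stmt5_general (F H : Measure ℝ) [IsProbabilityMeasure F]
    (a u θ : ℝ) (ha : 0 < a) (hθ : θ ∈ Set.Ioc (0 : ℝ) 1)
    (hF : F = ENNReal.ofReal (1 - θ) • H
        + ENNReal.ofReal θ • ((triMeasure a).conv (Measure.dirac u)))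
    (p q : ℝ) (hq : 0 < q) (hqp : q ≤ p) (hp : p ≤ 1) :
    ∃ H' : Measure ℝ, IsProbabilityMeasure H' ∧
      F = ENNReal.ofReal (1 - q * θ) • H'
        + ENNReal.ofReal (q * θ) • ((triMeasure (p * a)).conv (Measure.dirac u)) := by
  have hp0 : 0 < p := hq.trans_le hqp
  have := isProbabilityMeasure_triMeasure ha
  have := isProbabilityMeasure_triMeasure (mul_pos hp0 ha)
  refine Measure.exists_eq_smul_add_smul_of_smul_le (mul_nonneg hq.le hθ.1.le) ?_
  calc ENNReal.ofReal (q * θ) • (triMeasure (p * a)).conv (Measure.dirac u)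
      = ENNReal.ofReal θ • (ENNReal.ofReal q • triMeasure (p * a)).conv (Measure.dirac u) := by
        rw [Measure.conv_smul_left, smul_smul, ← ENNReal.ofReal_mul hθ.1.le, mul_comm]
    _ ≤ ENNReal.ofReal θ • (triMeasure a).conv (Measure.dirac u) := by
        rw [Measure.conv_dirac, Measure.conv_dirac]
        gcongr
        · fun_prop
        · exact smul_triMeasure_le ha hp0 hqp hp
    _ ≤ F := hF ▸ Measure.le_add_left le_rfl

/-- If `F = (1-θ)·H + θ·(K_a ∗ δ_u)` with `a > 0`, `θ ∈ (0,1]`, then for all `0 < q ≤ p ≤ 1`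
there is a probability measure `H'` with `F = (1-qθ)·H' + qθ·(K_{pa} ∗ δ_u)`. -/
theorem stmt5 (F H : Measure ℝ) [IsProbabilityMeasure F] [IsProbabilityMeasure H]
    (a u θ : ℝ) (ha : 0 < a) (hθ : θ ∈ Set.Ioc (0 : ℝ) 1)
    (hF : F = ENNReal.ofReal (1 - θ) • H
        + ENNReal.ofReal θ • ((triMeasure a).conv (Measure.dirac u)))
    (p q : ℝ) (hq : 0 < q) (hqp : q ≤ p) (hp : p ≤ 1) :
    ∃ H' : Measure ℝ, IsProbabilityMeasure H' ∧
      F = ENNReal.ofReal (1 - q * θ) • H'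
        + ENNReal.ofReal (q * θ) • ((triMeasure (p * a)).conv (Measure.dirac u)) :=
  stmt5_general F H a u θ ha hθ hF p q hq hqp hp
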